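/- Explicit separable solution of a degenerate one-dimensional parabolic equation: Let p > 2 and C₀ > 0. Define α(t) = (1 + C₀t)^{−1/(p−2)}, u(x,t) = α(t)·(1 − |x|^{p/(p−1)}) for x ∈ ℝ and t > −1/C₀, and a(x,t) = ((p−1)^p / ((p−2)·p^{p−1}))·C₀·(1 − |x|^{p/(p−1)}). Then for every x ≠ 0 and t > −1/C₀, the function u is differentiable in t and twice differentiable in x at (x,t), and ∂_t u(x,t) − a(x,t)·|∂_x u(x,t)|^{p−2}·∂²_x u(x,t) = 0. -/

import Mathlib

/-!
The solution separates as `u = α(t) φ(x)` with `φ(x) = 1 - |x|^q`, `q = p/(p-1)`. The time factor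
solves `α' = -(C₀/(p-2)) α^(p-1)`, and `|φ'|^(p-2) φ''` is the constant `-q^(p-1)/(p-1)`
because the powers of `|x|` cancel: `(q-1)(p-2) + (q-2) = 0`. Hence both terms of the equation are
multiples of `C₀ α^(p-1) φ`, and the constant in `a` is exactly the one making them agree.
-/

open MeasureTheory Metric Set

noncomputable section

abbrev En (n : ℕ) := EuclideanSpace ℝ (Fin n)

def pucciMinus (lam Lam : ℝ) {n : ℕ} (M : Matrix (Fin n) (Fin n) ℝ) : ℝ :=
  if h : M.IsHermitian then
    ∑ i, (lam * max (h.eigenvalues i) 0 + Lam * min (h.eigenvalues i) 0)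
  else 0

def pucciPlus (lam Lam : ℝ) {n : ℕ} (M : Matrix (Fin n) (Fin n) ℝ) : ℝ :=
  if h : M.IsHermitian then
    ∑ i, (Lam * max (h.eigenvalues i) 0 + lam * min (h.eigenvalues i) 0)
  else 0

def timeDeriv {n : ℕ} (φ : En n → ℝ → ℝ) (x : En n) (t : ℝ) : ℝ :=
  deriv (fun s => φ x s) t

def spatialGrad {n : ℕ} (φ : En n → ℝ → ℝ) (x : En n) (t : ℝ) : En n :=
  gradient (fun y => φ y t) x

def spatialHess {n : ℕ} (φ : En n → ℝ → ℝ) (x : En n) (t : ℝ) :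
    Matrix (Fin n) (Fin n) ℝ :=
  Matrix.of fun i j =>
    fderiv ℝ (fun y => fderiv ℝ (fun z => φ z t) y (EuclideanSpace.single j 1)) x
      (EuclideanSpace.single i 1)

/-- `φ` touches `u` from below at `(x₀,t₀)` within `U × (T₁,T₂]`. -/
def TouchesBelow {n : ℕ} (U : Set (En n)) (T₁ T₂ : ℝ) (u φ : En n → ℝ → ℝ)
    (x₀ : En n) (t₀ : ℝ) : Prop :=
  (∀ x ∈ U, ∀ t ∈ Set.Ioc T₁ T₂, t ≤ t₀ → φ x t ≤ u x t) ∧ φ x₀ t₀ = u x₀ t₀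

def TouchesAbove {n : ℕ} (U : Set (En n)) (T₁ T₂ : ℝ) (u φ : En n → ℝ → ℝ)
    (x₀ : En n) (t₀ : ℝ) : Prop :=
  (∀ x ∈ U, ∀ t ∈ Set.Ioc T₁ T₂, t ≤ t₀ → u x t ≤ φ x t) ∧ φ x₀ t₀ = u x₀ t₀

/-- viscosity supersolution of `∂ₜu - |Du|^(p-2) P⁻(D²u) ≥ 0` on `U × (T₁,T₂]`. -/
def IsViscositySupersolution {n : ℕ} (p lam Lam : ℝ) (U : Set (En n)) (T₁ T₂ : ℝ)
    (u : En n → ℝ → ℝ) : Prop :=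
  ∀ φ : En n → ℝ → ℝ, ContDiff ℝ 2 (fun q : En n × ℝ => φ q.1 q.2) →
    ∀ x₀ ∈ U, ∀ t₀ ∈ Set.Ioc T₁ T₂, TouchesBelow U T₁ T₂ u φ x₀ t₀ →
      0 ≤ timeDeriv φ x₀ t₀ -
        ‖spatialGrad φ x₀ t₀‖ ^ (p - 2) * pucciMinus lam Lam (spatialHess φ x₀ t₀)

/-- viscosity subsolution of `∂ₜu - |Du|^(p-2) P⁺(D²u) ≤ 0` on `U × (T₁,T₂]`. -/
def IsViscositySubsolution {n : ℕ} (p lam Lam : ℝ) (U : Set (En n)) (T₁ T₂ : ℝ)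
    (u : En n → ℝ → ℝ) : Prop :=
  ∀ φ : En n → ℝ → ℝ, ContDiff ℝ 2 (fun q : En n × ℝ => φ q.1 q.2) →
    ∀ x₀ ∈ U, ∀ t₀ ∈ Set.Ioc T₁ T₂, TouchesAbove U T₁ T₂ u φ x₀ t₀ →
      timeDeriv φ x₀ t₀ -
        ‖spatialGrad φ x₀ t₀‖ ^ (p - 2) * pucciPlus lam Lam (spatialHess φ x₀ t₀) ≤ 0

lemma hasDerivAt_abs_rpow_of_ne_zero (r : ℝ) {y : ℝ} (hy : y ≠ 0) :
    HasDerivAt (fun z : ℝ => |z| ^ r) (r * |y| ^ (r - 2) * y) y := by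
  convert (hasDerivAt_abs hy).rpow_const (p := r) (Or.inl (abs_ne_zero.mpr hy)) using 1
  have key : |y| ^ (r - 1) * SignType.sign y = |y| ^ (r - 2) * y := by
    rw [show r - 1 = r - 2 + 1 by ring, Real.rpow_add_one (abs_ne_zero.mpr hy), mul_assoc,
      abs_mul_sign]
  linear_combination (-r) * key

lemma hasDerivAt_abs_rpow_mul_self_of_ne_zero (r : ℝ) {y : ℝ} (hy : y ≠ 0) :
    HasDerivAt (fun z : ℝ => |z| ^ r * z) ((r + 1) * |y| ^ r) y := by
  refine ((hasDerivAt_abs_rpow_of_ne_zero r hy).mul (hasDerivAt_id' y)).congr_deriv ?_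
  have hy2 : |y| ^ (r - 2) * y ^ 2 = |y| ^ r := by
    rw [← sq_abs, ← Real.rpow_natCast, ← Real.rpow_add (abs_pos.mpr hy)]
    norm_num
  linear_combination r * hy2

lemma hasDerivAt_one_add_mul_rpow_neg_inv {p C t : ℝ} (hp : p ≠ 2) (ht : 0 < 1 + C * t) :
    HasDerivAt (fun s => (1 + C * s) ^ (-(1 / (p - 2))))
      (-(C / (p - 2)) * ((1 + C * t) ^ (-(1 / (p - 2)))) ^ (p - 1)) t := by
  have hlin : HasDerivAt (fun s => 1 + C * s) C t := by
    simpa using ((hasDerivAt_id t).const_mul C).const_add 1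
  convert hlin.rpow_const (p := -(1 / (p - 2))) (Or.inl ht.ne') using 1
  have hp2 : p - 2 ≠ 0 := sub_ne_zero.mpr hp
  rw [← Real.rpow_mul ht.le, show -(1 / (p - 2)) * (p - 1) = -(1 / (p - 2)) - 1 by
    field_simp; ring]
  ring

lemma hasDerivAt_one_sub_abs_rpow (q : ℝ) {y : ℝ} (hy : y ≠ 0) :
    HasDerivAt (fun z : ℝ => 1 - |z| ^ q) (-(q * |y| ^ (q - 2) * y)) y := by
  simpa using (hasDerivAt_abs_rpow_of_ne_zero q hy).const_sub 1

lemma hasDerivAt_deriv_one_sub_abs_rpow (q : ℝ) {x : ℝ} (hx : x ≠ 0) :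
    HasDerivAt (deriv fun z : ℝ => 1 - |z| ^ q) (-(q * ((q - 1) * |x| ^ (q - 2)))) x := by
  have hderiv :
      (deriv fun z : ℝ => 1 - |z| ^ q) =ᶠ[nhds x] fun y => -q * (|y| ^ (q - 2) * y) := by
    filter_upwards [eventually_ne_nhds hx] with y hy
    rw [(hasDerivAt_one_sub_abs_rpow q hy).deriv]; ring
  have := ((hasDerivAt_abs_rpow_mul_self_of_ne_zero (q - 2) hx).const_mul (-q))
  exact (this.congr_of_eventuallyEq hderiv).congr_deriv (by ring)

lemma abs_deriv_rpow_mul_deriv_deriv_one_sub_abs_rpow {p : ℝ} (hp : 1 < p) {x : ℝ}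
    (hx : x ≠ 0) :
    |deriv (fun z : ℝ => 1 - |z| ^ (p / (p - 1))) x| ^ (p - 2) *
        deriv (deriv fun z : ℝ => 1 - |z| ^ (p / (p - 1))) x
      = -((p / (p - 1)) ^ (p - 1) / (p - 1)) := by
  set q := p / (p - 1) with hq
  have hp1 : 0 < p - 1 := by linarith
  have hq0 : 0 < q := by positivity
  have hx0 : 0 < |x| := abs_pos.mpr hx
  rw [(hasDerivAt_one_sub_abs_rpow q hx).deriv, (hasDerivAt_deriv_one_sub_abs_rpow q hx).deriv]
  have habs : |-(q * |x| ^ (q - 2) * x)| = q * |x| ^ (q - 1) := by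
    rw [abs_neg, abs_mul, abs_mul, abs_of_pos hq0, abs_of_pos (Real.rpow_pos_of_pos hx0 _),
      mul_assoc, ← Real.rpow_add_one hx0.ne']
    ring_nf
  rw [habs, Real.mul_rpow hq0.le (Real.rpow_nonneg hx0.le _), ← Real.rpow_mul hx0.le]
  have hx_exp : |x| ^ ((q - 1) * (p - 2)) * |x| ^ (q - 2) = 1 := by
    rw [← Real.rpow_add hx0, show (q - 1) * (p - 2) + (q - 2) = 0 by
      rw [hq]; field_simp; ring, Real.rpow_zero]
  have hq_exp : q ^ (p - 2) * q = q ^ (p - 1) := by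
    rw [← Real.rpow_add_one hq0.ne']; ring_nf
  have hq1 : q - 1 = 1 / (p - 1) := by rw [hq]; field_simp; ring
  calc _ = -(q ^ (p - 2) * q * (q - 1) * (|x| ^ ((q - 1) * (p - 2)) * |x| ^ (q - 2))) := by ring
    _ = _ := by rw [hq_exp, hx_exp, hq1]; ring

lemma sub_one_rpow_div_mul_div_rpow_div {p : ℝ} (hp : 1 < p) :
    (p - 1) ^ p / ((p - 2) * p ^ (p - 1)) * ((p / (p - 1)) ^ (p - 1) / (p - 1)) = 1 / (p - 2) := by
  have hp1 : 0 < p - 1 := by linarith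
  have hp0 : 0 < p := by linarith
  rw [Real.div_rpow hp0.le hp1.le, show (p - 1) ^ p = (p - 1) ^ (p - 1) * (p - 1) by
    rw [← Real.rpow_add_one hp1.ne']; ring_nf]
  have : (p - 1) ^ (p - 1) ≠ 0 := (Real.rpow_pos_of_pos hp1 _).ne'
  have : p ^ (p - 1) ≠ 0 := (Real.rpow_pos_of_pos hp0 _).ne'
  field_simp

/-- explicit separable solution of a degenerate 1-D parabolic equation. -/
theorem explicit_separable_solution (p C₀ : ℝ) (hp : 2 < p) (hC₀ : 0 < C₀)
    (u a : ℝ → ℝ → ℝ)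
    (hu : u = fun x t => (1 + C₀ * t) ^ (-(1 / (p - 2))) * (1 - |x| ^ (p / (p - 1))))
    (ha : a = fun x t =>
      ((p - 1) ^ p / ((p - 2) * p ^ (p - 1))) * C₀ * (1 - |x| ^ (p / (p - 1)))) :
    ∀ x : ℝ, x ≠ 0 → ∀ t : ℝ, -1 / C₀ < t →
      DifferentiableAt ℝ (fun s => u x s) t ∧
      DifferentiableAt ℝ (fun y => u y t) x ∧
      DifferentiableAt ℝ (fun y => deriv (fun z => u z t) y) x ∧
      deriv (fun s => u x s) t -
          a x t * |deriv (fun y => u y t) x| ^ (p - 2) *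
            deriv (fun y => deriv (fun z => u z t) y) x = 0 := by
  intro x hx t ht
  subst hu ha
  simp only [deriv_const_mul_field']
  have hpos : 0 < 1 + C₀ * t := by
    have := (div_lt_iff₀ hC₀).mp ht
    linarith
  set α := (1 + C₀ * t) ^ (-(1 / (p - 2)))
  have hα : 0 < α := Real.rpow_pos_of_pos hpos _
  have hαp : α ^ (p - 2) * α = α ^ (p - 1) := by
    rw [← Real.rpow_add_one hα.ne']; ring_nf
  have htime :=
    (hasDerivAt_one_add_mul_rpow_neg_inv hp.ne' hpos).mul_const (1 - |x| ^ (p / (p - 1)))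
  refine ⟨htime.differentiableAt,
    (hasDerivAt_one_sub_abs_rpow _ hx).differentiableAt.const_mul α,
    (hasDerivAt_deriv_one_sub_abs_rpow _ hx).differentiableAt.const_mul α, ?_⟩
  rw [htime.deriv, abs_mul, abs_of_pos hα, Real.mul_rpow hα.le (abs_nonneg _)]
  have hp1 : 1 < p := by linarith
  have hprofile := abs_deriv_rpow_mul_deriv_deriv_one_sub_abs_rpow hp1 hx
  have hcoeff := sub_one_rpow_div_mul_div_rpow_div hp1
  set φx := 1 - |x| ^ (p / (p - 1))
  linear_combination (-((p - 1) ^ p / ((p - 2) * p ^ (p - 1)) * C₀ * φx * α ^ (p - 2) * α)) *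
      hprofile + (C₀ * φx * α ^ (p - 2) * α) * hcoeff + (C₀ * φx / (p - 2)) * hαp
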